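/- arXiv:2311.16086 — 4 statements merged into one kernel-verified Lean document; each statement's English description precedes it below -/
import Mathlib

section
/- If f is L_f-smooth, S is a random d×d matrix with E[S] = I and λ_max(E[SᵀS]) = L_D finite, then f̃(x) = E[f(s + S(x-s))] satisfies f̃(x+h) ≤ f̃(x) + ⟨∇f̃(x), h⟩ + (L_D L_f / 2)‖h‖² for all x, h. -/
open MeasureTheory Matrix
open scoped RealInnerProductSpace

/-!
The smoothness inequality of `f` at the point `s + S (x - s)` with increment `S h` holds for
every realisation of `S`; moving `S` across the inner product turns its linear term into
`⟪Sᵀ ∇f(s + S (x - s)), h⟫`, and taking expectations then gives the claim, with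
`E ‖S h‖² ≤ L_D ‖h‖²` controlling the quadratic term.
-/

theorem Matrix.inner_toEuclideanLin_transpose {m n : Type*} [Fintype m] [Fintype n]
    [DecidableEq m] [DecidableEq n] (A : Matrix m n ℝ) (v : EuclideanSpace ℝ m)
    (w : EuclideanSpace ℝ n) :
    ⟪toEuclideanLin Aᵀ v, w⟫ = ⟪v, toEuclideanLin A w⟫ := by
  rw [← conjTranspose_eq_transpose_of_trivial, toEuclideanLin_conjTranspose_eq_adjoint,
    LinearMap.adjoint_inner_left]

theorem upper_quadratic_bound_add_toEuclideanLin {m n : Type*} [Fintype m] [Fintype n]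
    [DecidableEq m] [DecidableEq n] {f : EuclideanSpace ℝ m → ℝ}
    {g : EuclideanSpace ℝ m → EuclideanSpace ℝ m} {L : ℝ}
    (hf : ∀ x h, f (x + h) ≤ f x + ⟪g x, h⟫ + L / 2 * ‖h‖ ^ 2)
    (A : Matrix m n ℝ) (y : EuclideanSpace ℝ m) (h : EuclideanSpace ℝ n) :
    f (y + toEuclideanLin A h) ≤
      f y + ⟪toEuclideanLin Aᵀ (g y), h⟫ + L / 2 * ‖toEuclideanLin A h‖ ^ 2 := by
  rw [inner_toEuclideanLin_transpose]
  exact hf y (toEuclideanLin A h)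

theorem integral_inner_const {α E : Type*} [MeasurableSpace α] {μ : Measure α}
    [NormedAddCommGroup E] [InnerProductSpace ℝ E] [CompleteSpace E] {f : α → E}
    (hf : Integrable f μ) (c : E) :
    ∫ a, ⟪f a, c⟫ ∂μ = ⟪∫ a, f a ∂μ, c⟫ := by
  simp_rw [real_inner_comm c]
  exact integral_inner hf c

theorem mast_tilde_smooth_general {d : ℕ} {Ω : Type*} [MeasurableSpace Ω]
    (μ : Measure Ω)
    (f : EuclideanSpace ℝ (Fin d) → ℝ)
    (g : EuclideanSpace ℝ (Fin d) → EuclideanSpace ℝ (Fin d))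
    (Lf LD : ℝ) (hLf : 0 < Lf)
    (hsmooth : ∀ x h : EuclideanSpace ℝ (Fin d),
      f (x + h) ≤ f x + ⟪g x, h⟫ + Lf / 2 * ‖h‖ ^ 2)
    (S : Ω → Matrix (Fin d) (Fin d) ℝ)
    (hSS_int : ∀ v : EuclideanSpace ℝ (Fin d),
      Integrable (fun ω => ‖Matrix.toEuclideanLin (S ω) v‖ ^ 2) μ)
    (hLD : ∀ v : EuclideanSpace ℝ (Fin d),
      (∫ ω, ‖Matrix.toEuclideanLin (S ω) v‖ ^ 2 ∂μ) ≤ LD * ‖v‖ ^ 2)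
    (s : EuclideanSpace ℝ (Fin d))
    (hf_int : ∀ x : EuclideanSpace ℝ (Fin d),
      Integrable (fun ω => f (s + Matrix.toEuclideanLin (S ω) (x - s))) μ)
    (hg_int : ∀ x : EuclideanSpace ℝ (Fin d),
      Integrable (fun ω =>
        Matrix.toEuclideanLin (S ω)ᵀ (g (s + Matrix.toEuclideanLin (S ω) (x - s)))) μ) :
    ∀ x h : EuclideanSpace ℝ (Fin d),
      (∫ ω, f (s + Matrix.toEuclideanLin (S ω) (x + h - s)) ∂μ) ≤
        (∫ ω, f (s + Matrix.toEuclideanLin (S ω) (x - s)) ∂μ)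
        + ⟪∫ ω, Matrix.toEuclideanLin (S ω)ᵀ
            (g (s + Matrix.toEuclideanLin (S ω) (x - s))) ∂μ, h⟫
        + LD * Lf / 2 * ‖h‖ ^ 2 := by
  intro x h
  have hpointwise ω : f (s + toEuclideanLin (S ω) (x + h - s)) ≤
      f (s + toEuclideanLin (S ω) (x - s))
        + ⟪toEuclideanLin (S ω)ᵀ (g (s + toEuclideanLin (S ω) (x - s))), h⟫
        + Lf / 2 * ‖toEuclideanLin (S ω) h‖ ^ 2 := by
    rw [show x + h - s = (x - s) + h by abel, map_add, ← add_assoc]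
    exact upper_quadratic_bound_add_toEuclideanLin hsmooth (S ω) _ h
  have hlin_int := (hg_int x).inner_const (𝕜 := ℝ) h
  have hquad_int := (hSS_int h).const_mul (Lf / 2)
  calc (∫ ω, f (s + toEuclideanLin (S ω) (x + h - s)) ∂μ)
      ≤ ∫ ω, (f (s + toEuclideanLin (S ω) (x - s))
          + ⟪toEuclideanLin (S ω)ᵀ (g (s + toEuclideanLin (S ω) (x - s))), h⟫
          + Lf / 2 * ‖toEuclideanLin (S ω) h‖ ^ 2) ∂μ :=
        integral_mono (hf_int (x + h)) (((hf_int x).add hlin_int).add hquad_int) hpointwise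
    _ = (∫ ω, f (s + toEuclideanLin (S ω) (x - s)) ∂μ)
          + ⟪∫ ω, toEuclideanLin (S ω)ᵀ (g (s + toEuclideanLin (S ω) (x - s))) ∂μ, h⟫
          + Lf / 2 * ∫ ω, ‖toEuclideanLin (S ω) h‖ ^ 2 ∂μ := by
        rw [integral_add _ hquad_int, integral_add (hf_int x) hlin_int,
          integral_inner_const (hg_int x), integral_const_mul]
        exact (hf_int x).add hlin_int
    _ ≤ _ := by
        have := mul_le_mul_of_nonneg_left (hLD h) (half_pos hLf).le
        linarith

/-- If `f` is `L_f`-smooth (with gradient `g`), `S` a random matrix with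
`E[S] = I` and `λ_max(E[SᵀS]) ≤ L_D` (encoded via the quadratic form
`E[‖S v‖²] ≤ L_D ‖v‖²`), then `f̃(x) = E[f(s + S(x-s))]` satisfies
`f̃(x+h) ≤ f̃(x) + ⟪∇f̃(x), h⟫ + (L_D L_f/2)‖h‖²`, where
`∇f̃(x) = E[Sᵀ ∇f(s + S(x-s))]`. -/
theorem mast_tilde_smooth {d : ℕ} {Ω : Type*} [MeasurableSpace Ω]
    (μ : Measure Ω) [IsProbabilityMeasure μ]
    (f : EuclideanSpace ℝ (Fin d) → ℝ)
    (g : EuclideanSpace ℝ (Fin d) → EuclideanSpace ℝ (Fin d))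
    (Lf LD : ℝ) (hLf : 0 < Lf)
    (hsmooth : ∀ x h : EuclideanSpace ℝ (Fin d),
      f (x + h) ≤ f x + ⟪g x, h⟫ + Lf / 2 * ‖h‖ ^ 2)
    (S : Ω → Matrix (Fin d) (Fin d) ℝ)
    (hS_int : ∀ i j, Integrable (fun ω => S ω i j) μ)
    (hS_mean : ∀ i j, (∫ ω, S ω i j ∂μ) = (1 : Matrix (Fin d) (Fin d) ℝ) i j)
    (hSS_int : ∀ v : EuclideanSpace ℝ (Fin d),
      Integrable (fun ω => ‖Matrix.toEuclideanLin (S ω) v‖ ^ 2) μ)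
    (hLD : ∀ v : EuclideanSpace ℝ (Fin d),
      (∫ ω, ‖Matrix.toEuclideanLin (S ω) v‖ ^ 2 ∂μ) ≤ LD * ‖v‖ ^ 2)
    (s : EuclideanSpace ℝ (Fin d))
    (hf_int : ∀ x : EuclideanSpace ℝ (Fin d),
      Integrable (fun ω => f (s + Matrix.toEuclideanLin (S ω) (x - s))) μ)
    (hg_int : ∀ x : EuclideanSpace ℝ (Fin d),
      Integrable (fun ω =>
        Matrix.toEuclideanLin (S ω)ᵀ (g (s + Matrix.toEuclideanLin (S ω) (x - s)))) μ) :
    ∀ x h : EuclideanSpace ℝ (Fin d),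
      (∫ ω, f (s + Matrix.toEuclideanLin (S ω) (x + h - s)) ∂μ) ≤
        (∫ ω, f (s + Matrix.toEuclideanLin (S ω) (x - s)) ∂μ)
        + ⟪∫ ω, Matrix.toEuclideanLin (S ω)ᵀ
            (g (s + Matrix.toEuclideanLin (S ω) (x - s))) ∂μ, h⟫
        + LD * Lf / 2 * ‖h‖ ^ 2 :=
  mast_tilde_smooth_general μ f g Lf LD hLf hsmooth S hSS_int hLD s hf_int hg_int
end

section
/- If f is L_f-smooth, S is a random d×d matrix with E[S] = I and L_D = λ_max(E[SᵀS]), then f̃(x) ≤ f(x) + ((L_D − 1) L_f / 2)‖x − s‖² for all x ∈ ℝ^d. -/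
open MeasureTheory Matrix
open scoped RealInnerProductSpace

/-!
Write `s + S (x - s) = x + Y` with `Y = (S - 1) (x - s)`. Since `E[S] = 1`, `Y` has mean zero, so
integrating the smoothness bound `f (x + Y) ≤ f x + ⟪g x, Y⟫ + L_f / 2 ‖Y‖²` kills the linear
term, and `E ‖Y‖² = E ‖S (x - s)‖² - ‖x - s‖² ≤ (L_D - 1) ‖x - s‖²`.
-/

lemma toEuclideanLin_apply_eq_sum {m n : Type*} [Fintype n] [DecidableEq n] (M : Matrix m n ℝ)
    (v : EuclideanSpace ℝ n) (i : m) : toEuclideanLin M v i = ∑ j, M i j * v j := rfl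

section RandomMatrix

variable {Ω m n : Type*} [MeasurableSpace Ω] {μ : Measure Ω} [Fintype m] [Fintype n]
  [DecidableEq n] {S : Ω → Matrix m n ℝ}

lemma integrable_toEuclideanLin_apply (hS : ∀ i j, Integrable (fun ω => S ω i j) μ)
    (v : EuclideanSpace ℝ n) : Integrable (fun ω => toEuclideanLin (S ω) v) μ :=
  Integrable.of_eval_piLp fun i =>
    integrable_finsetSum _ fun j _ => (hS i j).mul_const (v j)

lemma integral_toEuclideanLin_apply (hS : ∀ i j, Integrable (fun ω => S ω i j) μ)
    (v : EuclideanSpace ℝ n) :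
    ∫ ω, toEuclideanLin (S ω) v ∂μ = toEuclideanLin (Matrix.of fun i j => ∫ ω, S ω i j ∂μ) v := by
  ext i
  rw [eval_integral_piLp fun i => (integrable_toEuclideanLin_apply hS v).eval_piLp i]
  simp only [toEuclideanLin_apply_eq_sum]
  rw [integral_finsetSum _ fun j _ => (hS i j).mul_const (v j)]
  simp only [integral_mul_const, Matrix.of_apply]

end RandomMatrix

section SecondMoment

variable {Ω E : Type*} [MeasurableSpace Ω] {μ : Measure Ω} [IsProbabilityMeasure μ]
  [NormedAddCommGroup E] [InnerProductSpace ℝ E] [CompleteSpace E] {X : Ω → E}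

lemma integral_norm_sub_sq_of_integral_eq (hX : MemLp X 2 μ) {m : E} (hm : ∫ ω, X ω ∂μ = m) :
    ∫ ω, ‖X ω - m‖ ^ 2 ∂μ = ∫ ω, ‖X ω‖ ^ 2 ∂μ - ‖m‖ ^ 2 := by
  have hX1 : Integrable X μ := hX.integrable one_le_two
  have hinner : ∫ ω, ⟪m, X ω⟫ ∂μ = ‖m‖ ^ 2 := by
    rw [integral_inner hX1, hm, real_inner_self_eq_norm_sq]
  have h2 : Integrable (fun ω => 2 * ⟪m, X ω⟫) μ := (hX1.const_inner m).const_mul 2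
  simp_rw [norm_sub_sq_real, real_inner_comm m]
  rw [integral_add ?_ (integrable_const _), integral_sub hX.norm.integrable_sq h2,
    integral_const_mul, hinner, integral_const, probReal_univ, one_smul]
  · ring
  · exact hX.norm.integrable_sq.sub h2

lemma integral_comp_add_le_of_quadratic_upper_bound {f : E → ℝ} {x g : E} {L : ℝ}
    (hf : ∀ h, f (x + h) ≤ f x + ⟪g, h⟫ + L / 2 * ‖h‖ ^ 2) {Y : Ω → E} (hY : MemLp Y 2 μ)
    (hY_mean : ∫ ω, Y ω ∂μ = 0) (hfY : Integrable (fun ω => f (x + Y ω)) μ) :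
    ∫ ω, f (x + Y ω) ∂μ ≤ f x + L / 2 * ∫ ω, ‖Y ω‖ ^ 2 ∂μ := by
  have hY1 : Integrable Y μ := hY.integrable one_le_two
  have hlin : Integrable (fun ω => f x + ⟪g, Y ω⟫) μ := (integrable_const _).add (hY1.const_inner g)
  calc ∫ ω, f (x + Y ω) ∂μ ≤ ∫ ω, f x + ⟪g, Y ω⟫ + L / 2 * ‖Y ω‖ ^ 2 ∂μ :=
        integral_mono hfY (hlin.add (hY.norm.integrable_sq.const_mul _)) fun ω => hf (Y ω)
    _ = f x + L / 2 * ∫ ω, ‖Y ω‖ ^ 2 ∂μ := by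
        rw [integral_add hlin (hY.norm.integrable_sq.const_mul _),
          integral_add (integrable_const _) (hY1.const_inner g), integral_inner hY1, hY_mean,
          inner_zero_right, integral_const, integral_const_mul, probReal_univ, one_smul, add_zero]

end SecondMoment

/-- If `f` is `L_f`-smooth (with gradient `g`), `S` is a random matrix
with `E[S] = I` and `λ_max(E[SᵀS]) ≤ L_D` (quadratic-form encoding), then
`f̃(x) = E[f(s + S(x-s))] ≤ f(x) + ((L_D - 1) L_f / 2) ‖x - s‖²` for all `x`. -/
theorem mast_tilde_upper {d : ℕ} {Ω : Type*} [MeasurableSpace Ω]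
    (μ : Measure Ω) [IsProbabilityMeasure μ]
    (f : EuclideanSpace ℝ (Fin d) → ℝ)
    (g : EuclideanSpace ℝ (Fin d) → EuclideanSpace ℝ (Fin d))
    (Lf LD : ℝ) (hLf : 0 < Lf)
    (hsmooth : ∀ x h : EuclideanSpace ℝ (Fin d),
      f (x + h) ≤ f x + ⟪g x, h⟫ + Lf / 2 * ‖h‖ ^ 2)
    (S : Ω → Matrix (Fin d) (Fin d) ℝ)
    (hS_int : ∀ i j, Integrable (fun ω => S ω i j) μ)
    (hS_mean : ∀ i j, (∫ ω, S ω i j ∂μ) = (1 : Matrix (Fin d) (Fin d) ℝ) i j)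
    (hSS_int : ∀ v : EuclideanSpace ℝ (Fin d),
      Integrable (fun ω => ‖Matrix.toEuclideanLin (S ω) v‖ ^ 2) μ)
    (hLD : ∀ v : EuclideanSpace ℝ (Fin d),
      (∫ ω, ‖Matrix.toEuclideanLin (S ω) v‖ ^ 2 ∂μ) ≤ LD * ‖v‖ ^ 2)
    (s : EuclideanSpace ℝ (Fin d))
    (hf_int : ∀ x : EuclideanSpace ℝ (Fin d),
      Integrable (fun ω => f (s + Matrix.toEuclideanLin (S ω) (x - s))) μ) :
    ∀ x : EuclideanSpace ℝ (Fin d),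
      (∫ ω, f (s + Matrix.toEuclideanLin (S ω) (x - s)) ∂μ) ≤
        f x + (LD - 1) * Lf / 2 * ‖x - s‖ ^ 2 := by
  intro x
  set v := x - s
  set T : Ω → EuclideanSpace ℝ (Fin d) := fun ω => toEuclideanLin (S ω) v
  have hT : MemLp T 2 μ :=
    (memLp_two_iff_integrable_sq_norm
      (integrable_toEuclideanLin_apply hS_int v).aestronglyMeasurable).2 (hSS_int v)
  have hT_mean : ∫ ω, T ω ∂μ = v := by
    rw [integral_toEuclideanLin_apply hS_int, show Matrix.of (fun i j => ∫ ω, S ω i j ∂μ) = 1 from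
      Matrix.ext hS_mean, toLpLin_one, LinearMap.id_apply]
  have hshift : ∀ ω, s + T ω = x + (T ω - v) := fun ω => by simp only [v]; abel
  have hdev_mean : ∫ ω, T ω - v ∂μ = 0 := by
    rw [integral_sub (hT.integrable one_le_two) (integrable_const v), hT_mean, integral_const,
      probReal_univ, one_smul, sub_self]
  have hvar : ∫ ω, ‖T ω - v‖ ^ 2 ∂μ ≤ (LD - 1) * ‖v‖ ^ 2 := by
    rw [integral_norm_sub_sq_of_integral_eq hT hT_mean]
    linarith [hLD v]
  calc ∫ ω, f (s + T ω) ∂μ = ∫ ω, f (x + (T ω - v)) ∂μ := by simp_rw [hshift]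
    _ ≤ f x + Lf / 2 * ∫ ω, ‖T ω - v‖ ^ 2 ∂μ :=
        integral_comp_add_le_of_quadratic_upper_bound (hsmooth x) (hT.sub (memLp_const v))
          hdev_mean (by simp_rw [← hshift]; exact hf_int x)
    _ ≤ f x + (LD - 1) * Lf / 2 * ‖v‖ ^ 2 := by
        have := mul_le_mul_of_nonneg_left hvar (half_pos hLf).le
        linarith
end

section
/- Let f be L_f-smooth, μ_f-strongly convex, S a random matrix with E[S] = I, L_D = λ_max(E[SᵀS]), μ_D = λ_min(E[SᵀS]). If x* minimizes f and x_D* minimizes f̃(x) = E[f(s + S(x−s))], then f(x*) ≤ f(x_D*) ≤ f(x*) + ((L_D−1)L_f/2)‖x*−s‖² − ((μ_D−1)μ_f/2)‖x_D*−s‖². -/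
open MeasureTheory Matrix
open scoped RealInnerProductSpace

/-!
Write `s + S (x - s) = x + ξ` with `ξ = (S - I) (x - s)`. Smoothness and strong convexity at `x`
sandwich `f (x + ξ)` between two quadratic models `f x + ⟪g x, ξ⟫ + c ‖ξ‖²`. Since `E[S] = I`,
`⟪g x, ξ⟫` has mean zero, and `E ‖ξ‖² = E ‖S v‖² - ‖v‖²` with `v = x - s`, which lies between
`(μ_D - 1) ‖v‖²` and `(L_D - 1) ‖v‖²`. Integrating gives the two comparisons between `f̃` and `f`,
and the upper bound on `f x_D*` is the chain `f x_D* + … ≤ f̃ x_D* ≤ f̃ x* ≤ f x* + …`.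
-/

section QuadraticModel

variable {E : Type*} [NormedAddCommGroup E] [InnerProductSpace ℝ E]
  {Ω : Type*} [MeasurableSpace Ω] {μ : Measure Ω} [IsProbabilityMeasure μ]

theorem integrable_norm_sub_sq {X : Ω → E} (v : E)
    (hX : Integrable (fun ω => ‖X ω‖ ^ 2) μ) (hXv : Integrable (fun ω => ⟪v, X ω⟫) μ) :
    Integrable (fun ω => ‖X ω - v‖ ^ 2) μ := by
  simp only [norm_sub_sq_real, real_inner_comm v]
  exact (hX.sub' (hXv.const_mul 2)).fun_add (integrable_const _)

theorem integral_norm_sub_sq {X : Ω → E} (v : E)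
    (hX : Integrable (fun ω => ‖X ω‖ ^ 2) μ) (hXv : Integrable (fun ω => ⟪v, X ω⟫) μ)
    (hmean : ∫ ω, ⟪v, X ω⟫ ∂μ = ⟪v, v⟫) :
    ∫ ω, ‖X ω - v‖ ^ 2 ∂μ = ∫ ω, ‖X ω‖ ^ 2 ∂μ - ‖v‖ ^ 2 := by
  simp only [norm_sub_sq_real, real_inner_comm v] at hXv hmean ⊢
  rw [integral_add (hX.sub' (hXv.const_mul 2)) (integrable_const _),
    integral_sub hX (hXv.const_mul 2), integral_const_mul, hmean, integral_const,
    real_inner_self_eq_norm_sq]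
  simp
  ring

theorem integral_quadratic_model {ξ : Ω → E} (a c : ℝ) (g : E)
    (hg : Integrable (fun ω => ⟪g, ξ ω⟫) μ) (hg_mean : ∫ ω, ⟪g, ξ ω⟫ ∂μ = 0)
    (hξ : Integrable (fun ω => ‖ξ ω‖ ^ 2) μ) :
    ∫ ω, (a + ⟪g, ξ ω⟫ + c * ‖ξ ω‖ ^ 2) ∂μ = a + c * ∫ ω, ‖ξ ω‖ ^ 2 ∂μ := by
  rw [integral_add ((integrable_const a).fun_add hg) (hξ.const_mul c),
    integral_add (integrable_const a) hg, hg_mean, integral_const_mul, integral_const]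
  simp

end QuadraticModel

section RandomMatrix

variable {d : ℕ} {Ω : Type*} [MeasurableSpace Ω] {μ : Measure Ω}
  {S : Ω → Matrix (Fin d) (Fin d) ℝ}

theorem inner_toEuclideanLin_eq_sum (M : Matrix (Fin d) (Fin d) ℝ)
    (v w : EuclideanSpace ℝ (Fin d)) :
    ⟪w, toEuclideanLin M v⟫ = ∑ i, ∑ j, w i * v j * M i j := by
  simp only [PiLp.inner_apply, RCLike.inner_apply, conj_trivial, toLpLin_apply,
    mulVec, dotProduct, Finset.sum_mul]
  refine Finset.sum_congr rfl fun i _ => Finset.sum_congr rfl fun j _ => ?_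
  ring

theorem integrable_inner_toEuclideanLin (hS : ∀ i j, Integrable (fun ω => S ω i j) μ)
    (v w : EuclideanSpace ℝ (Fin d)) :
    Integrable (fun ω => ⟪w, toEuclideanLin (S ω) v⟫) μ := by
  simp only [inner_toEuclideanLin_eq_sum]
  exact integrable_finsetSum _ fun i _ =>
    integrable_finsetSum _ fun j _ => (hS i j).const_mul _

theorem integral_inner_toEuclideanLin (hS : ∀ i j, Integrable (fun ω => S ω i j) μ)
    (hS_mean : ∀ i j, ∫ ω, S ω i j ∂μ = (1 : Matrix (Fin d) (Fin d) ℝ) i j)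
    (v w : EuclideanSpace ℝ (Fin d)) :
    ∫ ω, ⟪w, toEuclideanLin (S ω) v⟫ ∂μ = ⟪w, v⟫ := by
  simp only [inner_toEuclideanLin_eq_sum]
  rw [integral_finsetSum _ fun i _ =>
    integrable_finsetSum _ fun j _ => (hS i j).const_mul _]
  simp only [integral_finsetSum _ fun j _ => (hS _ j).const_mul _, integral_const_mul, hS_mean,
    ← inner_toEuclideanLin_eq_sum]
  simp

end RandomMatrix

section Sketch

variable {d : ℕ} {Ω : Type*} [MeasurableSpace Ω] {μ : Measure Ω} [IsProbabilityMeasure μ]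
  {S : Ω → Matrix (Fin d) (Fin d) ℝ}

theorem integral_sketch_le_of_le_quadratic (hS : ∀ i j, Integrable (fun ω => S ω i j) μ)
    (hS_mean : ∀ i j, ∫ ω, S ω i j ∂μ = (1 : Matrix (Fin d) (Fin d) ℝ) i j)
    (hSS : ∀ v : EuclideanSpace ℝ (Fin d),
      Integrable (fun ω => ‖toEuclideanLin (S ω) v‖ ^ 2) μ)
    {F : EuclideanSpace ℝ (Fin d) → ℝ} {x s G : EuclideanSpace ℝ (Fin d)} {c : ℝ}
    (hF : ∀ h, F (x + h) ≤ F x + ⟪G, h⟫ + c * ‖h‖ ^ 2)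
    (hF_int : Integrable (fun ω => F (s + toEuclideanLin (S ω) (x - s))) μ) :
    ∫ ω, F (s + toEuclideanLin (S ω) (x - s)) ∂μ ≤
      F x + c * (∫ ω, ‖toEuclideanLin (S ω) (x - s)‖ ^ 2 ∂μ - ‖x - s‖ ^ 2) := by
  set v := x - s
  have hG : Integrable (fun ω => ⟪G, toEuclideanLin (S ω) v - v⟫) μ := by
    simp only [inner_sub_right]
    exact (integrable_inner_toEuclideanLin hS v G).sub' (integrable_const _)
  have hG_mean : ∫ ω, ⟪G, toEuclideanLin (S ω) v - v⟫ ∂μ = 0 := by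
    simp only [inner_sub_right]
    rw [integral_sub (integrable_inner_toEuclideanLin hS v G) (integrable_const _),
      integral_inner_toEuclideanLin hS hS_mean, integral_const]
    simp
  have hξ := integrable_norm_sub_sq v (hSS v) (integrable_inner_toEuclideanLin hS v v)
  calc ∫ ω, F (s + toEuclideanLin (S ω) v) ∂μ
      ≤ ∫ ω, (F x + ⟪G, toEuclideanLin (S ω) v - v⟫
          + c * ‖toEuclideanLin (S ω) v - v‖ ^ 2) ∂μ := by
        refine integral_mono hF_int (((integrable_const _).fun_add hG).fun_add (hξ.const_mul c))
          fun ω => ?_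
        have hshift : s + toEuclideanLin (S ω) v = x + (toEuclideanLin (S ω) v - v) := by
          simp only [v]; abel
        simpa only [hshift] using hF (toEuclideanLin (S ω) v - v)
    _ = F x + c * ∫ ω, ‖toEuclideanLin (S ω) v - v‖ ^ 2 ∂μ :=
        integral_quadratic_model _ _ _ hG hG_mean hξ
    _ = F x + c * (∫ ω, ‖toEuclideanLin (S ω) v‖ ^ 2 ∂μ - ‖v‖ ^ 2) := by
        rw [integral_norm_sub_sq v (hSS v) (integrable_inner_toEuclideanLin hS v v)
          (integral_inner_toEuclideanLin hS hS_mean v v)]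

theorem integral_sketch_le_of_smooth (hS : ∀ i j, Integrable (fun ω => S ω i j) μ)
    (hS_mean : ∀ i j, ∫ ω, S ω i j ∂μ = (1 : Matrix (Fin d) (Fin d) ℝ) i j)
    (hSS : ∀ v : EuclideanSpace ℝ (Fin d),
      Integrable (fun ω => ‖toEuclideanLin (S ω) v‖ ^ 2) μ)
    {f : EuclideanSpace ℝ (Fin d) → ℝ} {g : EuclideanSpace ℝ (Fin d) → EuclideanSpace ℝ (Fin d)}
    {Lf LD : ℝ} (hLf : 0 ≤ Lf) (hsmooth : ∀ x h, f (x + h) ≤ f x + ⟪g x, h⟫ + Lf / 2 * ‖h‖ ^ 2)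
    (hLD : ∀ v, ∫ ω, ‖toEuclideanLin (S ω) v‖ ^ 2 ∂μ ≤ LD * ‖v‖ ^ 2)
    {x s : EuclideanSpace ℝ (Fin d)}
    (hf_int : Integrable (fun ω => f (s + toEuclideanLin (S ω) (x - s))) μ) :
    ∫ ω, f (s + toEuclideanLin (S ω) (x - s)) ∂μ ≤ f x + (LD - 1) * Lf / 2 * ‖x - s‖ ^ 2 :=
  (integral_sketch_le_of_le_quadratic hS hS_mean hSS (hsmooth x) hf_int).trans
    (by nlinarith [hLD (x - s)])

theorem le_integral_sketch_of_strongConvex (hS : ∀ i j, Integrable (fun ω => S ω i j) μ)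
    (hS_mean : ∀ i j, ∫ ω, S ω i j ∂μ = (1 : Matrix (Fin d) (Fin d) ℝ) i j)
    (hSS : ∀ v : EuclideanSpace ℝ (Fin d),
      Integrable (fun ω => ‖toEuclideanLin (S ω) v‖ ^ 2) μ)
    {f : EuclideanSpace ℝ (Fin d) → ℝ} {g : EuclideanSpace ℝ (Fin d) → EuclideanSpace ℝ (Fin d)}
    {μf μD : ℝ} (hμf : 0 ≤ μf) (hconv : ∀ x h, f x + ⟪g x, h⟫ + μf / 2 * ‖h‖ ^ 2 ≤ f (x + h))
    (hμD : ∀ v, μD * ‖v‖ ^ 2 ≤ ∫ ω, ‖toEuclideanLin (S ω) v‖ ^ 2 ∂μ)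
    {x s : EuclideanSpace ℝ (Fin d)}
    (hf_int : Integrable (fun ω => f (s + toEuclideanLin (S ω) (x - s))) μ) :
    f x + (μD - 1) * μf / 2 * ‖x - s‖ ^ 2 ≤ ∫ ω, f (s + toEuclideanLin (S ω) (x - s)) ∂μ := by
  have hneg := integral_sketch_le_of_le_quadratic hS hS_mean hSS
    (F := fun y => -f y) (G := -g x) (c := -(μf / 2))
    (fun h => by simp only [inner_neg_left]; linarith [hconv x h]) hf_int.neg
  rw [integral_neg] at hneg
  nlinarith [hμD (x - s)]

end Sketch

/-- Let `f` be `L_f`-smooth and `μ_f`-strongly convex (with gradient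
`g`), `S` a random matrix with `E[S] = I`, `λ_max(E[SᵀS]) ≤ L_D` and
`λ_min(E[SᵀS]) ≥ μ_D` (quadratic-form encodings). If `x*` minimizes `f` and `x_D*`
minimizes `f̃(x) = E[f(s + S(x-s))]`, then
`f(x*) ≤ f(x_D*) ≤ f(x*) + ((L_D-1)L_f/2)‖x*-s‖² - ((μ_D-1)μ_f/2)‖x_D*-s‖²`. -/
theorem mast_minima_relation {d : ℕ} {Ω : Type*} [MeasurableSpace Ω]
    (μ : Measure Ω) [IsProbabilityMeasure μ]
    (f : EuclideanSpace ℝ (Fin d) → ℝ)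
    (g : EuclideanSpace ℝ (Fin d) → EuclideanSpace ℝ (Fin d))
    (Lf μf LD μD : ℝ) (hLf : 0 < Lf) (hμf : 0 < μf)
    (hsmooth : ∀ x h : EuclideanSpace ℝ (Fin d),
      f (x + h) ≤ f x + ⟪g x, h⟫ + Lf / 2 * ‖h‖ ^ 2)
    (hconv : ∀ x h : EuclideanSpace ℝ (Fin d),
      f (x + h) ≥ f x + ⟪g x, h⟫ + μf / 2 * ‖h‖ ^ 2)
    (S : Ω → Matrix (Fin d) (Fin d) ℝ)
    (hS_int : ∀ i j, Integrable (fun ω => S ω i j) μ)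
    (hS_mean : ∀ i j, (∫ ω, S ω i j ∂μ) = (1 : Matrix (Fin d) (Fin d) ℝ) i j)
    (hSS_int : ∀ v : EuclideanSpace ℝ (Fin d),
      Integrable (fun ω => ‖Matrix.toEuclideanLin (S ω) v‖ ^ 2) μ)
    (hLD : ∀ v : EuclideanSpace ℝ (Fin d),
      (∫ ω, ‖Matrix.toEuclideanLin (S ω) v‖ ^ 2 ∂μ) ≤ LD * ‖v‖ ^ 2)
    (hμD : ∀ v : EuclideanSpace ℝ (Fin d),
      μD * ‖v‖ ^ 2 ≤ ∫ ω, ‖Matrix.toEuclideanLin (S ω) v‖ ^ 2 ∂μ)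
    (s : EuclideanSpace ℝ (Fin d))
    (hf_int : ∀ x : EuclideanSpace ℝ (Fin d),
      Integrable (fun ω => f (s + Matrix.toEuclideanLin (S ω) (x - s))) μ)
    (xstar xD : EuclideanSpace ℝ (Fin d))
    (hxstar : ∀ y, f xstar ≤ f y)
    (hxD : ∀ y, (∫ ω, f (s + Matrix.toEuclideanLin (S ω) (xD - s)) ∂μ) ≤
      ∫ ω, f (s + Matrix.toEuclideanLin (S ω) (y - s)) ∂μ) :
    f xstar ≤ f xD ∧
      f xD ≤ f xstar + (LD - 1) * Lf / 2 * ‖xstar - s‖ ^ 2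
        - (μD - 1) * μf / 2 * ‖xD - s‖ ^ 2 := by
  refine ⟨hxstar xD, ?_⟩
  have hupper := integral_sketch_le_of_smooth hS_int hS_mean hSS_int hLf.le hsmooth hLD
    (hf_int xstar)
  have hlower := le_integral_sketch_of_strongConvex hS_int hS_mean hSS_int hμf.le hconv hμD
    (hf_int xD)
  linarith [hxD xstar]
end

section
/- Suppose nonnegative sequences (δ_t)_{t≥0}, (r_t)_{t≥0} satisfy γ r_t ≤ (1 + γ² M₁) δ_t − δ_{t+1} + γ² M₂ for all t, with γ > 0 and M₁, M₂ ≥ 0. Define weights w_{−1} > 0, w_t = w_{t−1}/(1 + γ² M₁). Then for every T ≥ 1: Σ_{t=0}^{T−1} w_t r_t ≤ (w_{−1}/γ) δ_0 − (w_{T−1}/γ) δ_T + γ M₂ Σ_{t=0}^{T−1} w_t. -/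
open Finset

/-!
Multiplying the `t`-th inequality by `w_t` and using `(1 + γ² M₁) w_t = w_{t-1}` turns the
`δ`-terms into `w_{t-1} δ_t − w_t δ_{t+1}`, which telescope over `t < T`.
-/

/-- Here `v (t + 1)` is the weight of step `t`, so `v 0` plays the role of `w_{-1}`. -/
theorem sum_weighted_le_of_le_mul_sub_add {c : ℝ} {v δ s b : ℕ → ℝ}
    (hv : ∀ t, 0 ≤ v (t + 1)) (hvc : ∀ t, c * v (t + 1) = v t)
    (hrec : ∀ t, s t ≤ c * δ t - δ (t + 1) + b t) (T : ℕ) :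
    ∑ t ∈ range T, v (t + 1) * s t ≤
      v 0 * δ 0 - v T * δ T + ∑ t ∈ range T, v (t + 1) * b t := by
  have hstep : ∀ t, v (t + 1) * s t ≤
      (v t * δ t - v (t + 1) * δ (t + 1)) + v (t + 1) * b t := by
    intro t
    calc v (t + 1) * s t ≤ v (t + 1) * (c * δ t - δ (t + 1) + b t) :=
          mul_le_mul_of_nonneg_left (hrec t) (hv t)
      _ = (c * v (t + 1) * δ t - v (t + 1) * δ (t + 1)) + v (t + 1) * b t := by ring
      _ = _ := by rw [hvc]
  calc ∑ t ∈ range T, v (t + 1) * s t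
      ≤ ∑ t ∈ range T, ((v t * δ t - v (t + 1) * δ (t + 1)) + v (t + 1) * b t) :=
        sum_le_sum fun t _ => hstep t
    _ = _ := by rw [sum_add_distrib, sum_range_sub' (fun t => v t * δ t)]

theorem weighted_sum_lemma_general (γ M₁ M₂ : ℝ) (hγ : 0 < γ) (hM₁ : 0 ≤ M₁)
    (δ r : ℕ → ℝ)
    (hrec : ∀ t, γ * r t ≤ (1 + γ ^ 2 * M₁) * δ t - δ (t + 1) + γ ^ 2 * M₂)
    (wpred : ℝ) (hwpred : 0 < wpred) (w : ℕ → ℝ)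
    (hw0 : w 0 = wpred / (1 + γ ^ 2 * M₁))
    (hwrec : ∀ t, w (t + 1) = w t / (1 + γ ^ 2 * M₁)) :
    ∀ T : ℕ, 1 ≤ T →
      ∑ t ∈ Finset.range T, w t * r t ≤
        wpred / γ * δ 0 - w (T - 1) / γ * δ T
          + γ * M₂ * ∑ t ∈ Finset.range T, w t := by
  intro T hT
  obtain ⟨n, rfl⟩ := Nat.exists_eq_add_of_le' hT
  have hc : 0 < 1 + γ ^ 2 * M₁ := by positivity
  have hw : ∀ t, 0 ≤ w t := by
    intro t
    induction t with
    | zero => rw [hw0]; positivity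
    | succ t ih => rw [hwrec]; positivity
  let v : ℕ → ℝ := fun t => if t = 0 then wpred else w (t - 1)
  have key := sum_weighted_le_of_le_mul_sub_add (v := v) (c := 1 + γ ^ 2 * M₁)
    (s := fun t => γ * r t) (b := fun _ => γ ^ 2 * M₂) (by simpa [v] using hw)
    (by rintro (_ | t) <;> simp [v, hw0, hwrec, mul_div_cancel₀ _ hc.ne']) hrec (n + 1)
  simp only [v, add_tsub_cancel_right, if_neg (Nat.succ_ne_zero _), if_true] at key
  rw [add_tsub_cancel_right, ← mul_le_mul_iff_right₀ hγ, mul_sum]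
  calc ∑ t ∈ range (n + 1), γ * (w t * r t)
      = ∑ t ∈ range (n + 1), w t * (γ * r t) := sum_congr rfl fun t _ => by ring
    _ ≤ _ := key
    _ = _ := by rw [← sum_mul]; field_simp

/-- If nonnegative sequences `(δ_t)`, `(r_t)` satisfy
`γ r_t ≤ (1 + γ² M₁) δ_t − δ_{t+1} + γ² M₂` for all `t`, and weights are defined by
`w_{-1} > 0`, `w_t = w_{t−1}/(1 + γ² M₁)`, then for every `T ≥ 1`:
`∑_{t<T} w_t r_t ≤ (w_{-1}/γ) δ_0 − (w_{T-1}/γ) δ_T + γ M₂ ∑_{t<T} w_t`. -/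
theorem weighted_sum_lemma (γ M₁ M₂ : ℝ) (hγ : 0 < γ) (hM₁ : 0 ≤ M₁) (hM₂ : 0 ≤ M₂)
    (δ r : ℕ → ℝ) (hδ : ∀ t, 0 ≤ δ t) (hr : ∀ t, 0 ≤ r t)
    (hrec : ∀ t, γ * r t ≤ (1 + γ ^ 2 * M₁) * δ t - δ (t + 1) + γ ^ 2 * M₂)
    (wpred : ℝ) (hwpred : 0 < wpred) (w : ℕ → ℝ)
    (hw0 : w 0 = wpred / (1 + γ ^ 2 * M₁))
    (hwrec : ∀ t, w (t + 1) = w t / (1 + γ ^ 2 * M₁)) :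
    ∀ T : ℕ, 1 ≤ T →
      ∑ t ∈ Finset.range T, w t * r t ≤
        wpred / γ * δ 0 - w (T - 1) / γ * δ T
          + γ * M₂ * ∑ t ∈ Finset.range T, w t :=
  weighted_sum_lemma_general γ M₁ M₂ hγ hM₁ δ r hrec wpred hwpred w hw0 hwrec
end
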